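/- arXiv:2401.07912 — 6 statements merged into one kernel-verified Lean document; each statement's English description precedes it below -/
import Mathlib

section
/- Let d ≥ 1 and let U₁, U₂ be d×d complex unitary matrices. Suppose there is a real number δ with 0 < δ < π such that ‖U₁ − U₂‖ ≤ 2·sin((π − δ)/4), where ‖·‖ is the L2 operator norm. Then 0 does not belong to the real convex hull of the spectrum of U₁ᴴ·U₂ (the spectrum taken over ℂ, viewed as a subset of ℂ ≅ ℝ²). -/
open scoped Matrix.Norms.L2Operator
open Matrix Real
open scoped Pointwise

/-- If two `d × d` unitary matrices `U₁, U₂` satisfy `‖U₁ - U₂‖ ≤ 2 * sin ((π - δ)/4)`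
(L2 operator norm) for some `0 < δ < π`, then `0` is not in the real convex hull of the
spectrum of `U₁ᴴ * U₂`. -/
theorem op_distance_convhull (d : ℕ) (hd : 1 ≤ d)
    (U₁ U₂ : Matrix (Fin d) (Fin d) ℂ)
    (hU₁ : U₁ ∈ Matrix.unitaryGroup (Fin d) ℂ)
    (hU₂ : U₂ ∈ Matrix.unitaryGroup (Fin d) ℂ)
    (δ : ℝ) (hδ0 : 0 < δ) (hδπ : δ < π)
    (hnorm : ‖U₁ - U₂‖ ≤ 2 * Real.sin ((π - δ) / 4)) :
    (0 : ℂ) ∉ convexHull ℝ (spectrum ℂ (U₁ᴴ * U₂)) := by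
  haveI : Nonempty (Fin d) := ⟨⟨0, hd⟩⟩
  set c : ℝ := Real.sin (δ / 2) with hc
  have hcpos : 0 < c := Real.sin_pos_of_pos_of_lt_pi (by linarith) (by linarith)
  -- The product is unitary
  have hU : U₁ᴴ * U₂ ∈ Matrix.unitaryGroup (Fin d) ℂ := by
    exact mul_mem (Unitary.star_mem hU₁) hU₂
  -- key norm bound : ‖1 - U₁ᴴ * U₂‖ ≤ ‖U₁ - U₂‖
  have hfact : (1 : Matrix (Fin d) (Fin d) ℂ) - U₁ᴴ * U₂ = U₁ᴴ * (U₁ - U₂) := by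
    rw [Matrix.mul_sub]
    have : U₁ᴴ * U₁ = 1 := hU₁.1
    rw [this]
  have hnormstar : ‖U₁ᴴ‖ = 1 := by
    have := CStarRing.norm_of_mem_unitary (Unitary.star_mem hU₁ : star U₁ ∈ unitary _)
    exact this
  have hkey : ‖(1 : Matrix (Fin d) (Fin d) ℂ) - U₁ᴴ * U₂‖ ≤ 2 * Real.sin ((π - δ) / 4) := by
    rw [hfact]
    calc ‖U₁ᴴ * (U₁ - U₂)‖ ≤ ‖U₁ᴴ‖ * ‖U₁ - U₂‖ := norm_mul_le _ _
      _ = ‖U₁ - U₂‖ := by rw [hnormstar, one_mul]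
      _ ≤ 2 * Real.sin ((π - δ) / 4) := hnorm
  -- spectrum is in the half plane re ≥ c
  have hsub : spectrum ℂ (U₁ᴴ * U₂) ⊆ {z : ℂ | c ≤ z.re} := by
    intro lam hlam
    have hnorm1 : ‖lam‖ = 1 := by
      have := spectrum.subset_circle_of_unitary hU hlam
      simpa [Metric.mem_sphere] using this
    have hmem : (1 : ℂ) - lam ∈ spectrum ℂ ((1 : Matrix (Fin d) (Fin d) ℂ) - U₁ᴴ * U₂) := by
      have : ((1 : ℂ) - lam) ∈ ({(1 : ℂ)} : Set ℂ) - spectrum ℂ (U₁ᴴ * U₂) :=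
        Set.sub_mem_sub rfl hlam
      rw [spectrum.singleton_sub_eq] at this
      simpa using this
    have hle : ‖(1 : ℂ) - lam‖ ≤ ‖(1 : Matrix (Fin d) (Fin d) ℂ) - U₁ᴴ * U₂‖ :=
      spectrum.norm_le_norm_of_mem hmem
    have hle2 : ‖(1 : ℂ) - lam‖ ≤ 2 * Real.sin ((π - δ) / 4) := hle.trans hkey
    -- square both sides
    have hsq : ‖(1 : ℂ) - lam‖ ^ 2 ≤ (2 * Real.sin ((π - δ) / 4)) ^ 2 := by
      apply pow_le_pow_left₀ (norm_nonneg _) hle2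
    have h1 : lam.re * lam.re + lam.im * lam.im = 1 := by
      have := Complex.normSq_apply lam
      rw [← Complex.sq_norm, hnorm1] at this
      linarith [this.symm]
    have hnormsq : ‖(1 : ℂ) - lam‖ ^ 2 = 2 - 2 * lam.re := by
      rw [Complex.sq_norm, Complex.normSq_apply]
      simp only [Complex.sub_re, Complex.sub_im, Complex.one_re, Complex.one_im]
      nlinarith [h1]
    have hrhs : (2 * Real.sin ((π - δ) / 4)) ^ 2 = 2 - 2 * c := by
      have h4 : Real.sin ((π - δ) / 4) ^ 2 = 1 / 2 - Real.cos (2 * ((π - δ) / 4)) / 2 := by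
        rw [Real.sin_sq_eq_half_sub]
      have h5 : Real.cos (2 * ((π - δ) / 4)) = c := by
        have : 2 * ((π - δ) / 4) = π / 2 - δ / 2 := by ring
        rw [this, Real.cos_pi_div_two_sub, hc]
      rw [show (2 * Real.sin ((π - δ) / 4)) ^ 2 = 4 * Real.sin ((π - δ) / 4) ^ 2 by ring,
        h4, h5]
      ring
    have := hnormsq ▸ hsq
    rw [hrhs] at this
    simp only [Set.mem_setOf_eq]
    linarith
  have hconv : convexHull ℝ (spectrum ℂ (U₁ᴴ * U₂)) ⊆ {z : ℂ | c ≤ z.re} :=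
    convexHull_min hsub (convex_halfSpace_re_ge c)
  intro h0
  have := hconv h0
  simp only [Set.mem_setOf_eq, Complex.zero_re] at this
  linarith
end

section
/- Let d ≥ 1 and let v₁, v₂ : Fin d → ℂ be unit vectors (Σᵢ |vⱼ(i)|² = 1 for j = 1,2). Let c = Σᵢ conj(v₁(i))·v₂(i) be their inner product and set α = 1 − |c|². Let R₁ = 2·|v₁⟩⟨v₁| − 1 and R₂ = 2·|v₂⟩⟨v₂| − 1 be the corresponding reflection matrices, where |v⟩⟨v| denotes the d×d matrix with (i,j) entry v(i)·conj(v(j)). Then the spectrum of R₁·R₂ is contained in the set {1, (1−2α) + 2i·√(α(1−α)), (1−2α) − 2i·√(α(1−α))}, where √ denotes the real square root. -/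
open Matrix

private lemma mulvv {d : ℕ} (a b c e : Fin d → ℂ) :
    Matrix.vecMulVec a (star b) * Matrix.vecMulVec c (star e) =
      (∑ i, (starRingEnd ℂ) (b i) * c i) • Matrix.vecMulVec a (star e) := by
  ext i j
  simp only [Matrix.mul_apply, Matrix.vecMulVec_apply, Matrix.smul_apply, Pi.star_apply,
    smul_eq_mul, Finset.sum_mul]
  refine Finset.sum_congr rfl fun k _ => ?_
  simp [Complex.star_def]
  ring

/-- For unit vectors `v₁, v₂ ∈ ℂᵈ` with overlap `c = ⟨v₁, v₂⟩` and `α = 1 - |c|²`, the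
spectrum of the product of the reflections `Rⱼ = 2|vⱼ⟩⟨vⱼ| - 1` is contained in
`{1, (1-2α) + 2i√(α(1-α)), (1-2α) - 2i√(α(1-α))}`. -/
theorem spectrum_reflections_subset (d : ℕ) (hd : 1 ≤ d)
    (v₁ v₂ : Fin d → ℂ)
    (hv₁ : ∑ i, ‖v₁ i‖ ^ 2 = 1)
    (hv₂ : ∑ i, ‖v₂ i‖ ^ 2 = 1) :
    let c : ℂ := ∑ i, (starRingEnd ℂ) (v₁ i) * v₂ i
    let α : ℝ := 1 - ‖c‖ ^ 2
    let R₁ : Matrix (Fin d) (Fin d) ℂ := 2 • Matrix.vecMulVec v₁ (star v₁) - 1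
    let R₂ : Matrix (Fin d) (Fin d) ℂ := 2 • Matrix.vecMulVec v₂ (star v₂) - 1
    spectrum ℂ (R₁ * R₂) ⊆
      {1, ((1 - 2 * α : ℝ) : ℂ) + 2 * (Real.sqrt (α * (1 - α)) : ℂ) * Complex.I,
          ((1 - 2 * α : ℝ) : ℂ) - 2 * (Real.sqrt (α * (1 - α)) : ℂ) * Complex.I} := by
  intro c α R₁ R₂
  -- basic scalar facts
  set cc : ℂ := (starRingEnd ℂ) c with hcc
  have habs : ∀ (v : Fin d → ℂ), (∑ i, ‖v i‖ ^ 2 = 1) →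
      ∑ i, (starRingEnd ℂ) (v i) * v i = 1 := by
    intro v hv
    have : ∀ i, (starRingEnd ℂ) (v i) * v i = ((‖v i‖ ^ 2 : ℝ) : ℂ) := by
      intro i
      rw [← Complex.normSq_eq_conj_mul_self, Complex.sq_norm]
    simp only [this]
    push_cast
    exact_mod_cast congrArg (Complex.ofReal) hv
  have h1 : ∑ i, (starRingEnd ℂ) (v₁ i) * v₁ i = 1 := habs v₁ hv₁
  have h2 : ∑ i, (starRingEnd ℂ) (v₂ i) * v₂ i = 1 := habs v₂ hv₂
  have hc2 : ∑ i, (starRingEnd ℂ) (v₂ i) * v₁ i = cc := by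
    rw [hcc, show c = ∑ i, (starRingEnd ℂ) (v₁ i) * v₂ i from rfl, map_sum]
    refine Finset.sum_congr rfl fun i _ => ?_
    rw [_root_.map_mul, Complex.conj_conj]
    ring
  set A : Matrix (Fin d) (Fin d) ℂ := Matrix.vecMulVec v₁ (star v₁) with hA
  set B : Matrix (Fin d) (Fin d) ℂ := Matrix.vecMulVec v₂ (star v₂) with hB
  set Cm : Matrix (Fin d) (Fin d) ℂ := Matrix.vecMulVec v₁ (star v₂) with hCm
  set Cm' : Matrix (Fin d) (Fin d) ℂ := Matrix.vecMulVec v₂ (star v₁) with hCm'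
  have hAA : A * A = A := by rw [hA, mulvv, h1, one_smul]
  have hAB : A * B = c • Cm := by rw [hA, hB, hCm, mulvv]
  have hAC : A * Cm = Cm := by rw [hA, hCm, mulvv, h1, one_smul]
  have hAC' : A * Cm' = c • A := by rw [hA, hCm', mulvv]
  have hBA : B * A = cc • Cm' := by rw [hB, hA, hCm', mulvv, hc2]
  have hBB : B * B = B := by rw [hB, mulvv, h2, one_smul]
  have hBC : B * Cm = cc • B := by rw [hB, hCm, mulvv, hc2]
  have hBC' : B * Cm' = Cm' := by rw [hB, hCm', mulvv, h2, one_smul]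
  have hCA : Cm * A = cc • A := by rw [hCm, hA, mulvv, hc2]
  have hCB : Cm * B = Cm := by rw [hCm, hB, mulvv, h2, one_smul]
  have hCC : Cm * Cm = cc • Cm := by rw [hCm, mulvv, hc2]
  have hCC' : Cm * Cm' = A := by rw [hCm, hCm', mulvv, h2, one_smul]
  set M : Matrix (Fin d) (Fin d) ℂ := R₁ * R₂ with hMdef
  have hM : M = (4 * c) • Cm - (2:ℂ) • A - (2:ℂ) • B + 1 := by
    have h2A : (2:ℕ) • A = (2:ℂ) • A := by rw [← Nat.cast_smul_eq_nsmul ℂ]; norm_num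
    have h2B : (2:ℕ) • B = (2:ℂ) • B := by rw [← Nat.cast_smul_eq_nsmul ℂ]; norm_num
    rw [hMdef, show R₁ = 2 • A - 1 from rfl, show R₂ = 2 • B - 1 from rfl, h2A, h2B]
    simp only [sub_mul, mul_sub, smul_mul_assoc, mul_smul_comm, smul_smul,
      one_mul, mul_one, hAB]
    module
  have hkey : (M - 1) * (M * M - (2 * (2 * (c * cc) - 1)) • M + 1) = 0 := by
    have hM2 : M * M = 1 - (8 * (c * cc)) • A - (8 * (c * cc)) • B
        + ((16 * (c * cc) - 4) * c) • Cm + (4 * cc) • Cm' := by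
      rw [hM]
      simp only [mul_add, add_mul, mul_sub, sub_mul, smul_mul_assoc, mul_smul_comm,
        hAA, hAB, hAC, hAC', hBA, hBB, hBC, hBC', hCA, hCB, hCC, hCC',
        one_mul, mul_one, smul_smul]
      module
    have hQ : M * M - (2 * (2 * (c * cc) - 1)) • M + 1 =
        (4 - 4 * (c * cc)) • (1 : Matrix (Fin d) (Fin d) ℂ)
          - (4:ℂ) • A - (4:ℂ) • B + (4 * c) • Cm + (4 * cc) • Cm' := by
      rw [hM2, hM]
      module
    rw [hQ, hM]
    simp only [mul_add, add_mul, mul_sub, sub_mul, smul_mul_assoc, mul_smul_comm,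
      hAA, hAB, hAC, hAC', hBA, hBB, hBC, hBC', hCA, hCB, hCC, hCC',
      one_mul, mul_one, smul_smul]
    module
  -- Cauchy–Schwarz : |c| ≤ 1
  have hα0 : 0 ≤ α := by
    have hx : ∀ (v : Fin d → ℂ), (∑ i, ‖v i‖ ^ 2 = 1) →
        ‖((WithLp.equiv 2 (Fin d → ℂ)).symm v : EuclideanSpace ℂ (Fin d))‖ = 1 := by
      intro v hv
      rw [EuclideanSpace.norm_eq]
      show Real.sqrt (∑ i, ‖v i‖ ^ 2) = 1
      rw [hv, Real.sqrt_one]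
    have hcs := @norm_inner_le_norm ℂ (EuclideanSpace ℂ (Fin d)) _ _ _
      ((WithLp.equiv 2 (Fin d → ℂ)).symm v₁) ((WithLp.equiv 2 (Fin d → ℂ)).symm v₂)
    rw [hx v₁ hv₁, hx v₂ hv₂, one_mul] at hcs
    have hinner : (inner ℂ ((WithLp.equiv 2 (Fin d → ℂ)).symm v₁)
        ((WithLp.equiv 2 (Fin d → ℂ)).symm v₂) : ℂ) = c := by
      rw [PiLp.inner_apply]
      simp [RCLike.inner_apply, c, mul_comm]
    rw [hinner] at hcs
    have : ‖c‖ ≤ 1 := hcs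
    have h0 : ‖c‖ ^ 2 ≤ 1 := by nlinarith [norm_nonneg c]
    simpa [α] using h0
  have hα1 : α ≤ 1 := by
    have := sq_nonneg ‖c‖
    simp only [α]; linarith
  have hr2 : (Real.sqrt (α * (1 - α))) ^ 2 = α * (1 - α) :=
    Real.sq_sqrt (mul_nonneg hα0 (by linarith))
  set μp : ℂ := ((1 - 2 * α : ℝ) : ℂ) + 2 * (Real.sqrt (α * (1 - α)) : ℂ) * Complex.I with hμp
  set μm : ℂ := ((1 - 2 * α : ℝ) : ℂ) - 2 * (Real.sqrt (α * (1 - α)) : ℂ) * Complex.I with hμm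
  have hs : ((1 - 2 * α : ℝ) : ℂ) = 2 * (c * cc) - 1 := by
    rw [hcc, Complex.mul_conj]
    have : Complex.normSq c = ‖c‖ ^ 2 := (Complex.sq_norm c).symm
    rw [this]
    push_cast
    simp only [α]
    push_cast
    ring
  have hsum : μp + μm = 2 * (2 * (c * cc) - 1) := by
    rw [hμp, hμm, ← hs]; ring
  have hprod : μp * μm = 1 := by
    rw [hμp, hμm]
    have : (((1 - 2 * α : ℝ) : ℂ) + 2 * (Real.sqrt (α * (1 - α)) : ℂ) * Complex.I) *
        (((1 - 2 * α : ℝ) : ℂ) - 2 * (Real.sqrt (α * (1 - α)) : ℂ) * Complex.I) =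
        ((1 - 2 * α : ℝ) : ℂ) ^ 2 + 4 * ((Real.sqrt (α * (1 - α)) : ℝ) : ℂ) ^ 2 := by
      linear_combination (-4 * ((Real.sqrt (α * (1 - α)) : ℝ) : ℂ)^2) * Complex.I_sq
    rw [this]
    have hre : (1 - 2 * α) ^ 2 + 4 * (Real.sqrt (α * (1 - α))) ^ 2 = 1 := by
      rw [hr2]; ring
    have hcast : ((1 - 2 * α : ℝ) : ℂ) ^ 2 + 4 * ((Real.sqrt (α * (1 - α)) : ℝ) : ℂ) ^ 2
        = (((1 - 2 * α) ^ 2 + 4 * (Real.sqrt (α * (1 - α))) ^ 2 : ℝ) : ℂ) := by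
      push_cast; ring
    rw [hcast, hre]
    norm_num
  -- polynomial annihilation
  have hpoly : (M - (1:ℂ) • 1) * ((M - μp • 1) * (M - μm • 1)) = 0 := by
    have : (M - μp • 1) * (M - μm • 1)
        = M * M - (2 * (2 * (c * cc) - 1)) • M + 1 := by
      have expand : (M - μp • 1) * (M - μm • 1)
          = M * M - (μp + μm) • M + (μp * μm) • (1 : Matrix (Fin d) (Fin d) ℂ) := by
        simp only [sub_mul, mul_sub, smul_mul_assoc, mul_smul_comm, smul_smul,
          smul_sub, mul_one, one_mul]
        module
      rw [expand, hsum, hprod, one_smul]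
    rw [this, show M - (1:ℂ) • 1 = M - 1 by rw [one_smul], hkey]
  intro z hz
  haveI : Nonempty (Fin d) := Fin.pos_iff_nonempty.mp hd
  have hmem : Polynomial.eval z ((Polynomial.X - Polynomial.C 1) *
      ((Polynomial.X - Polynomial.C μp) * (Polynomial.X - Polynomial.C μm)))
      ∈ spectrum ℂ (Polynomial.aeval M ((Polynomial.X - Polynomial.C 1) *
      ((Polynomial.X - Polynomial.C μp) * (Polynomial.X - Polynomial.C μm)))) :=
    spectrum.subset_polynomial_aeval M _ ⟨z, hz, rfl⟩
  have haev : Polynomial.aeval M ((Polynomial.X - Polynomial.C 1) *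
      ((Polynomial.X - Polynomial.C μp) * (Polynomial.X - Polynomial.C μm))) = 0 := by
    simp only [_root_.map_mul, map_sub, Polynomial.aeval_X, Polynomial.aeval_C,
      Algebra.algebraMap_eq_smul_one]
    exact hpoly
  rw [haev, spectrum.zero_eq] at hmem
  simp only [Polynomial.eval_mul, Polynomial.eval_sub, Polynomial.eval_X, Polynomial.eval_C,
    Set.mem_singleton_iff, mul_eq_zero, sub_eq_zero] at hmem
  simp only [Set.mem_insert_iff, Set.mem_singleton_iff]
  rcases hmem with (h | h | h)
  · exact Or.inl h
  · exact Or.inr (Or.inl (h.trans hμp.symm))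
  · exact Or.inr (Or.inr (h.trans hμm.symm))
end

section
/- Let 0 < Δ < 1. In ℂ⁴ (indexed by Fin 4, with basis vectors e₀ and e₃ playing the roles of |00⟩ and |11⟩), define the unit vectors ψ₁ = (1/√2)·(e₀ + e₃) and ψ₂ = √((1+√Δ)/2)·e₀ + √((1−√Δ)/2)·e₃, and the unitary matrices U₁ = 1 − 2·|ψ₁⟩⟨ψ₁| and U₂ = 1 − 2·|ψ₂⟩⟨ψ₂|. Then the spectrum of U₁ᴴ·U₂ equals the three-element set {1, √(1−Δ) + i·√Δ, √(1−Δ) − i·√Δ}. -/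
open Matrix

lemma hM_aux (a b c s t : ℝ) (ha2 : a^2 = (1+t)/2) (hb2 : b^2 = (1-t)/2)
    (hc2 : c^2 = 1/2) (hab : 2*(a*b) = s) :
    ((1 - 2 • vecMulVec ![(c:ℂ),0,0,(c:ℂ)] (star ![(c:ℂ),0,0,(c:ℂ)]))ᴴ *
     (1 - 2 • vecMulVec ![(a:ℂ),0,0,(b:ℂ)] (star ![(a:ℂ),0,0,(b:ℂ)]))) =
    !![(s:ℂ), 0, 0, -(t:ℂ); 0, 1, 0, 0; 0, 0, 1, 0; (t:ℂ), 0, 0, (s:ℂ)] := by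
  have hab' : a*b = s/2 := by linarith
  have h1 : c^2*a^2 = ((1+t)/2)*(1/2) := by rw [hc2, ha2]; ring
  have h2 : c^2*b^2 = ((1-t)/2)*(1/2) := by rw [hc2, hb2]; ring
  have h3 : c^2*(a*b) = (s/2)*(1/2) := by rw [hc2, hab']; ring
  ext i j
  fin_cases i <;> fin_cases j
  all_goals
    simp only [Fin.zero_eta, Fin.mk_one, Fin.reduceFinMk, two_smul, Matrix.mul_apply,
      Fin.sum_univ_four, Matrix.conjTranspose_apply, Matrix.sub_apply, Matrix.add_apply,
      Matrix.vecMulVec_apply, Matrix.one_apply, Pi.star_apply,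
      Matrix.cons_val_zero, Matrix.cons_val_one, Matrix.head_cons, Matrix.cons_val_two,
      Matrix.cons_val_three, Matrix.tail_cons, Fin.reduceEq, Fin.isValue,
      ite_true, ite_false, Matrix.cons_val', Matrix.empty_val', Matrix.cons_val_fin_one,
      Matrix.head_fin_const, Matrix.of_apply]
  all_goals norm_num [Complex.conj_ofReal]
  all_goals try norm_cast
  all_goals linarith [h1, h2, h3, hc2, ha2, hb2, hab']

lemma det_fin_four' (M : Matrix (Fin 4) (Fin 4) ℂ) :
    M.det =
      M 0 0 * (M 1 1 * (M 2 2 * M 3 3 - M 2 3 * M 3 2) - M 1 2 * (M 2 1 * M 3 3 - M 2 3 * M 3 1) +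
        M 1 3 * (M 2 1 * M 3 2 - M 2 2 * M 3 1)) -
      M 0 1 * (M 1 0 * (M 2 2 * M 3 3 - M 2 3 * M 3 2) - M 1 2 * (M 2 0 * M 3 3 - M 2 3 * M 3 0) +
        M 1 3 * (M 2 0 * M 3 2 - M 2 2 * M 3 0)) +
      M 0 2 * (M 1 0 * (M 2 1 * M 3 3 - M 2 3 * M 3 1) - M 1 1 * (M 2 0 * M 3 3 - M 2 3 * M 3 0) +
        M 1 3 * (M 2 0 * M 3 1 - M 2 1 * M 3 0)) -
      M 0 3 * (M 1 0 * (M 2 1 * M 3 2 - M 2 2 * M 3 1) - M 1 1 * (M 2 0 * M 3 2 - M 2 2 * M 3 0) +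
        M 1 2 * (M 2 0 * M 3 1 - M 2 1 * M 3 0)) := by
  simp [Matrix.det_succ_row_zero, Fin.sum_univ_succ,
    (by decide : (Fin.succ 2 : Fin 4) = 3), (by decide : (Fin.succAbove 2 2 : Fin 4) = 3),
    (by decide : (Fin.succAbove 1 2 : Fin 4) = 3), (by decide : (Fin.castSucc 2 : Fin 4) = 2),
    (by decide : (Fin.succAbove 3 2 : Fin 4) = 2)]
  ring

lemma spec_aux (s t : ℝ) :
    spectrum ℂ (!![(s:ℂ), 0, 0, -(t:ℂ); 0, 1, 0, 0; 0, 0, 1, 0; (t:ℂ), 0, 0, (s:ℂ)]) =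
      {1, (s:ℂ) + (t:ℂ) * Complex.I, (s:ℂ) - (t:ℂ) * Complex.I} := by
  ext μ
  rw [spectrum.mem_iff, Matrix.isUnit_iff_isUnit_det, isUnit_iff_ne_zero, not_ne_iff]
  have hdet : (algebraMap ℂ (Matrix (Fin 4) (Fin 4) ℂ) μ -
      !![(s:ℂ), 0, 0, -(t:ℂ); 0, 1, 0, 0; 0, 0, 1, 0; (t:ℂ), 0, 0, (s:ℂ)]).det =
      (μ - 1) * ((μ - 1) * ((μ - ((s:ℂ) + (t:ℂ) * Complex.I)) *
        (μ - ((s:ℂ) - (t:ℂ) * Complex.I)))) := by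
    rw [det_fin_four']
    simp only [Matrix.sub_apply, Matrix.algebraMap_matrix_apply, Matrix.cons_val_zero,
      Matrix.cons_val_one, Matrix.head_cons, Matrix.cons_val_two, Matrix.cons_val_three,
      Matrix.tail_cons, Matrix.cons_val', Matrix.empty_val', Matrix.cons_val_fin_one,
      Matrix.head_fin_const, Matrix.of_apply, Fin.reduceEq, ite_true, ite_false,
      Algebra.algebraMap_self_apply]
    norm_num
    linear_combination (μ - 1)^2 * (t:ℂ)^2 * Complex.I_sq
  rw [hdet]
  simp only [mul_eq_zero, sub_eq_zero, Set.mem_insert_iff, Set.mem_singleton_iff]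
  tauto

/-- For `0 < Δ < 1`, with `ψ₁ = (e₀ + e₃)/√2` and
`ψ₂ = √((1+√Δ)/2) e₀ + √((1-√Δ)/2) e₃` in `ℂ⁴`, and the unitaries
`Uⱼ = 1 - 2|ψⱼ⟩⟨ψⱼ|`, the spectrum of `U₁ᴴ * U₂` equals
`{1, √(1-Δ) + i√Δ, √(1-Δ) - i√Δ}`. -/
theorem entanglement_entropy_spectrum (Δ : ℝ) (hΔ0 : 0 < Δ) (hΔ1 : Δ < 1) :
    let ψ₁ : Fin 4 → ℂ := ![((1 / Real.sqrt 2 : ℝ) : ℂ), 0, 0, ((1 / Real.sqrt 2 : ℝ) : ℂ)]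
    let ψ₂ : Fin 4 → ℂ :=
      ![((Real.sqrt ((1 + Real.sqrt Δ) / 2) : ℝ) : ℂ), 0, 0,
        ((Real.sqrt ((1 - Real.sqrt Δ) / 2) : ℝ) : ℂ)]
    let U₁ : Matrix (Fin 4) (Fin 4) ℂ := 1 - 2 • Matrix.vecMulVec ψ₁ (star ψ₁)
    let U₂ : Matrix (Fin 4) (Fin 4) ℂ := 1 - 2 • Matrix.vecMulVec ψ₂ (star ψ₂)
    spectrum ℂ (U₁ᴴ * U₂) =
      {1, ((Real.sqrt (1 - Δ) : ℝ) : ℂ) + ((Real.sqrt Δ : ℝ) : ℂ) * Complex.I,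
          ((Real.sqrt (1 - Δ) : ℝ) : ℂ) - ((Real.sqrt Δ : ℝ) : ℂ) * Complex.I} := by
  intro ψ₁ ψ₂ U₁ U₂
  have ht0 : 0 ≤ Real.sqrt Δ := Real.sqrt_nonneg _
  have ht1 : Real.sqrt Δ < 1 := by
    rw [show (1:ℝ) = Real.sqrt 1 by simp]
    exact Real.sqrt_lt_sqrt hΔ0.le hΔ1
  have ht2 : Real.sqrt Δ ^ 2 = Δ := Real.sq_sqrt hΔ0.le
  have hs0 : 0 ≤ Real.sqrt (1 - Δ) := Real.sqrt_nonneg _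
  have hs2 : Real.sqrt (1 - Δ) ^ 2 = 1 - Δ := Real.sq_sqrt (by linarith)
  have ha2 : Real.sqrt ((1 + Real.sqrt Δ) / 2) ^ 2 = (1 + Real.sqrt Δ) / 2 :=
    Real.sq_sqrt (by linarith)
  have hb2 : Real.sqrt ((1 - Real.sqrt Δ) / 2) ^ 2 = (1 - Real.sqrt Δ) / 2 :=
    Real.sq_sqrt (by linarith)
  have ha0 : 0 ≤ Real.sqrt ((1 + Real.sqrt Δ) / 2) := Real.sqrt_nonneg _
  have hb0 : 0 ≤ Real.sqrt ((1 - Real.sqrt Δ) / 2) := Real.sqrt_nonneg _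
  have hab : 2 * (Real.sqrt ((1 + Real.sqrt Δ) / 2) * Real.sqrt ((1 - Real.sqrt Δ) / 2)) =
      Real.sqrt (1 - Δ) := by
    have h1 : (2 * (Real.sqrt ((1 + Real.sqrt Δ) / 2) * Real.sqrt ((1 - Real.sqrt Δ) / 2))) ^ 2 =
        Real.sqrt (1 - Δ) ^ 2 := by
      rw [hs2]; nlinarith [ha2, hb2, ht2]
    nlinarith [mul_nonneg ha0 hb0]
  have hc2 : (1 / Real.sqrt 2 : ℝ) ^ 2 = 1 / 2 := by
    rw [div_pow, Real.sq_sqrt (by norm_num : (0:ℝ) ≤ 2)]; norm_num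
  show spectrum ℂ
      ((1 - 2 • vecMulVec ![((1 / Real.sqrt 2 : ℝ) : ℂ), 0, 0, ((1 / Real.sqrt 2 : ℝ) : ℂ)]
          (star ![((1 / Real.sqrt 2 : ℝ) : ℂ), 0, 0, ((1 / Real.sqrt 2 : ℝ) : ℂ)]))ᴴ *
       (1 - 2 • vecMulVec
          ![((Real.sqrt ((1 + Real.sqrt Δ) / 2) : ℝ) : ℂ), 0, 0,
            ((Real.sqrt ((1 - Real.sqrt Δ) / 2) : ℝ) : ℂ)]
          (star ![((Real.sqrt ((1 + Real.sqrt Δ) / 2) : ℝ) : ℂ), 0, 0,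
            ((Real.sqrt ((1 - Real.sqrt Δ) / 2) : ℝ) : ℂ)]))) = _
  rw [hM_aux _ _ _ (Real.sqrt (1 - Δ)) (Real.sqrt Δ) ha2 hb2 hc2 hab, spec_aux]
end

section
/- For every real number β with β ≥ √(14/3), one has 9β⁴ − 40β² + 16 ≥ 0 and √(3β² − √(9β⁴ − 40β² + 16) + 4) / (√2 · β) ≤ 3/β, where √ denotes the real square root. -/
/-- For `β ≥ √(14/3)`, the radicand `9β⁴ - 40β² + 16` is nonnegative and
`√(3β² - √(9β⁴ - 40β² + 16) + 4) / (√2 · β) ≤ 3/β`. -/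
theorem gibbs_sampling_norm_bound (β : ℝ) (hβ : Real.sqrt (14 / 3) ≤ β) :
    0 ≤ 9 * β ^ 4 - 40 * β ^ 2 + 16 ∧
    Real.sqrt (3 * β ^ 2 - Real.sqrt (9 * β ^ 4 - 40 * β ^ 2 + 16) + 4) /
      (Real.sqrt 2 * β) ≤ 3 / β := by
  have h0 : (0:ℝ) ≤ 14 / 3 := by norm_num
  have hβ0 : 0 < β := lt_of_lt_of_le (Real.sqrt_pos.mpr (by norm_num)) hβ
  have hx : 14 / 3 ≤ β ^ 2 := by
    have := Real.sq_sqrt h0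
    nlinarith [Real.sqrt_nonneg (14/3)]
  have hR : 0 ≤ 9 * β ^ 4 - 40 * β ^ 2 + 16 := by nlinarith
  refine ⟨hR, ?_⟩
  have hkey : 3 * β ^ 2 - 14 ≤ Real.sqrt (9 * β ^ 4 - 40 * β ^ 2 + 16) := by
    rw [show (9 * β ^ 4 - 40 * β ^ 2 + 16) = (3 * β ^ 2 - 14)^2 + (44 * β ^ 2 - 180) by ring]
    calc 3 * β ^ 2 - 14 = Real.sqrt ((3 * β ^ 2 - 14)^2) := by
          rw [Real.sqrt_sq (by nlinarith)]
      _ ≤ _ := Real.sqrt_le_sqrt (by nlinarith)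
  have hinner : 3 * β ^ 2 - Real.sqrt (9 * β ^ 4 - 40 * β ^ 2 + 16) + 4 ≤ 18 := by
    linarith
  have h18 : Real.sqrt (3 * β ^ 2 - Real.sqrt (9 * β ^ 4 - 40 * β ^ 2 + 16) + 4)
      ≤ 3 * Real.sqrt 2 := by
    calc _ ≤ Real.sqrt 18 := Real.sqrt_le_sqrt hinner
      _ = 3 * Real.sqrt 2 := by
          rw [show (18:ℝ) = 3^2 * 2 by norm_num, Real.sqrt_mul (by positivity),
            Real.sqrt_sq (by norm_num)]
  have h2 : (0:ℝ) < Real.sqrt 2 := Real.sqrt_pos.mpr (by norm_num)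
  rw [div_le_div_iff₀ (by positivity) hβ0]
  calc Real.sqrt (3 * β ^ 2 - Real.sqrt (9 * β ^ 4 - 40 * β ^ 2 + 16) + 4) * β
      ≤ (3 * Real.sqrt 2) * β := by
        exact mul_le_mul_of_nonneg_right h18 hβ0.le
    _ = 3 * (Real.sqrt 2 * β) := by ring
end

section
/- For every real number t with t ≥ 1, one has 9 − 3/t² − 6/t ≥ 0 and √(3 − √(9 − 3/t² − 6/t) − 1/t) / √2 ≤ 1/t, where √ denotes the real square root. -/
lemma nffb_key (u : ℝ) (hu0 : 0 < u) (hu1 : u ≤ 1) :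
    0 ≤ 9 - 3 * u ^ 2 - 6 * u ∧
    Real.sqrt (3 - Real.sqrt (9 - 3 * u ^ 2 - 6 * u) - u) / Real.sqrt 2 ≤ u := by
  have h1 : 0 ≤ 9 - 3 * u ^ 2 - 6 * u := by nlinarith
  refine ⟨h1, ?_⟩
  set s := Real.sqrt (9 - 3 * u ^ 2 - 6 * u) with hs
  have hs0 : 0 ≤ s := Real.sqrt_nonneg _
  have hs2 : s ^ 2 = 9 - 3 * u ^ 2 - 6 * u := Real.sq_sqrt h1
  have hle : 3 - u - 2 * u ^ 2 ≤ s := by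
    rcases le_or_gt (3 - u - 2 * u ^ 2) 0 with h | h
    · linarith
    · nlinarith [sq_nonneg (s - (3 - u - 2 * u ^ 2)), sq_nonneg u, mul_pos hu0 hu0]
  have h2 : Real.sqrt (3 - s - u) ≤ Real.sqrt (2 * u ^ 2) := by
    apply Real.sqrt_le_sqrt; linarith
  have h3 : Real.sqrt (2 * u ^ 2) = Real.sqrt 2 * u := by
    rw [Real.sqrt_mul (by norm_num), Real.sqrt_sq hu0.le]
  have hsqrt2 : (0:ℝ) < Real.sqrt 2 := Real.sqrt_pos.2 (by norm_num)
  rw [div_le_iff₀ hsqrt2]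
  calc Real.sqrt (3 - s - u) ≤ Real.sqrt 2 * u := by rw [← h3]; exact h2
    _ = u * Real.sqrt 2 := mul_comm _ _

/-- For `t ≥ 1`, the radicand `9 - 3/t² - 6/t` is nonnegative and
`√(3 - √(9 - 3/t² - 6/t) - 1/t) / √2 ≤ 1/t`. -/
theorem no_fast_forwarding_norm_bound (t : ℝ) (ht : 1 ≤ t) :
    0 ≤ 9 - 3 / t ^ 2 - 6 / t ∧
    Real.sqrt (3 - Real.sqrt (9 - 3 / t ^ 2 - 6 / t) - 1 / t) / Real.sqrt 2 ≤ 1 / t := by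
  have ht0 : 0 < t := lt_of_lt_of_le one_pos ht
  have hu0 : 0 < 1 / t := by positivity
  have hu1 : 1 / t ≤ 1 := by rw [div_le_one ht0]; exact ht
  have e1 : 3 / t ^ 2 = 3 * (1 / t) ^ 2 := by field_simp
  have e2 : 6 / t = 6 * (1 / t) := by ring
  rw [e1, e2]
  exact nffb_key (1 / t) hu0 hu1
end

section
/- For every real number Δ with 0 ≤ Δ ≤ 1, one has 8 − 3Δ² − 8√(1−Δ²) ≥ 0 and (1/2)·(Δ + √(8 − 3Δ² − 8·√(1 − Δ²))) ≤ 2Δ, where √ denotes the real square root. -/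
/-- For `0 ≤ Δ ≤ 1`, the radicand `8 - 3Δ² - 8√(1-Δ²)` is nonnegative and
`(1/2)(Δ + √(8 - 3Δ² - 8√(1-Δ²))) ≤ 2Δ`. -/
theorem gsp_norm_bound (Δ : ℝ) (hΔ0 : 0 ≤ Δ) (hΔ1 : Δ ≤ 1) :
    0 ≤ 8 - 3 * Δ ^ 2 - 8 * Real.sqrt (1 - Δ ^ 2) ∧
    (1 / 2) * (Δ + Real.sqrt (8 - 3 * Δ ^ 2 - 8 * Real.sqrt (1 - Δ ^ 2))) ≤ 2 * Δ := by
  have h1 : (0:ℝ) ≤ 1 - Δ ^ 2 := by nlinarith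
  set s := Real.sqrt (1 - Δ ^ 2) with hsdef
  have hs0 : 0 ≤ s := Real.sqrt_nonneg _
  have hs2 : s ^ 2 = 1 - Δ ^ 2 := Real.sq_sqrt h1
  have hs1 : s ≤ 1 := by nlinarith
  have hrad : 0 ≤ 8 - 3 * Δ ^ 2 - 8 * s := by nlinarith [mul_nonneg (sub_nonneg.2 hs1) (show (0:ℝ) ≤ 5 - 3*s by nlinarith)]
  refine ⟨hrad, ?_⟩
  have hle : 8 - 3 * Δ ^ 2 - 8 * s ≤ (3 * Δ) ^ 2 := by nlinarith [mul_nonneg (show (0:ℝ) ≤ 3*s+1 by nlinarith) (sub_nonneg.2 hs1)]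
  have := Real.sqrt_le_sqrt hle
  rw [Real.sqrt_sq (by positivity)] at this
  linarith
end
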